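/- arXiv:1005.1384 — 3 statements merged into one kernel-verified Lean document; each statement's English description precedes it below -/
import Mathlib

section
/- Define m : ℕ → ℕ on the digits by m 2 = 5, m 5 = 2, and m d = d for d ∈ {0,1,8}, and define mir : ℕ → ℕ on two-digit numbers by mir n = 10 * m (n % 10) + m (n / 10). Then the 5×5 matrix W given by W i j = mir (M5 i (4 - j)), where M5 has rows (0,11,22,88,55), (82,58,5,10,21), (15,20,81,52,8), (51,2,18,25,80), (28,85,50,1,12), is a magic square with magic constant 176: every row, every column, and both main diagonals of W sum to 176. -/
/-!
Reading a square in a mirror reverses its columns, and reversing the columns of a magic square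
gives a magic square again (rows are permuted internally, columns are permuted, the two diagonals
are exchanged). So the statement reduces to the finite check that mirroring every numeral of `M5`
in place already yields a magic square with the same constant 176.
-/

def M5 : Fin 5 → Fin 5 → ℕ :=
  ![![0, 11, 22, 88, 55],
    ![82, 58, 5, 10, 21],
    ![15, 20, 81, 52, 8],
    ![51, 2, 18, 25, 80],
    ![28, 85, 50, 1, 12]]

def m : ℕ → ℕ
  | 2 => 5
  | 5 => 2
  | d => d

def mir (n : ℕ) : ℕ := 10 * m (n % 10) + m (n / 10)

def W : Fin 5 → Fin 5 → ℕ := fun i j => mir (M5 i (4 - j))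

def IsMagicSquare {α : Type*} [AddCommMonoid α] {n : ℕ} (A : Fin n → Fin n → α) (s : α) : Prop :=
  (∀ i, ∑ j, A i j = s) ∧ (∀ j, ∑ i, A i j = s) ∧
    ∑ i, A i i = s ∧ ∑ i, A i (Fin.rev i) = s

theorem IsMagicSquare.reverse_cols {α : Type*} [AddCommMonoid α] {n : ℕ}
    {A : Fin n → Fin n → α} {s : α} (h : IsMagicSquare A s) :
    IsMagicSquare (fun i j => A i (Fin.rev j)) s := by
  obtain ⟨hrow, hcol, hdiag, hanti⟩ := h
  refine ⟨fun i => ?_, fun j => hcol (Fin.rev j), hanti, ?_⟩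
  · rw [← hrow i]
    exact Equiv.sum_comp Fin.revPerm (A i)
  · simpa only [Fin.rev_rev] using hdiag

theorem isMagicSquare_mir_M5 : IsMagicSquare (fun i j => mir (M5 i j)) 176 := by
  unfold IsMagicSquare
  decide

theorem four_sub_eq_rev (j : Fin 5) : 4 - j = Fin.rev j := by
  fin_cases j <;> rfl

theorem W_magic :
    (∀ i : Fin 5, ∑ j, W i j = 176) ∧
    (∀ j : Fin 5, ∑ i, W i j = 176) ∧
    (∑ i, W i i = 176) ∧
    (∑ i : Fin 5, W i (4 - i) = 176) := by
  simp only [W, four_sub_eq_rev]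
  exact isMagicSquare_mir_M5.reverse_cols
end

section
/- Define rev : ℕ → ℕ on two-digit numbers by rev n = 10 * (n % 10) + n / 10. Then the 4×4 matrix N given by N i j = rev (M4 i j), where M4 has rows (52,11,85,28), (88,25,51,12), (21,82,18,55), (15,58,22,81), is a magic square with magic constant 176: every row, every column, and both main diagonals of N sum to 176. -/
def M4 : Fin 4 → Fin 4 → ℕ :=
  ![![52, 11, 85, 28],
    ![88, 25, 51, 12],
    ![21, 82, 18, 55],
    ![15, 58, 22, 81]]

def rev (n : ℕ) : ℕ := 10 * (n % 10) + n / 10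

def N : Fin 4 → Fin 4 → ℕ := fun i j => rev (M4 i j)

theorem N_magic :
    (∀ i : Fin 4, ∑ j, N i j = 176) ∧
    (∀ j : Fin 4, ∑ i, N i j = 176) ∧
    (∑ i, N i i = 176) ∧
    (∑ i : Fin 4, N i (3 - i) = 176) := by
  decide
end

section
/- Define rev : ℕ → ℕ on two-digit numbers by rev n = 10 * (n % 10) + n / 10. Then the 4×4 matrix R given by R i j = rev (M4 (3 - i) (3 - j)), where M4 has rows (52,11,85,28), (88,25,51,12), (21,82,18,55), (15,58,22,81), is a magic square with magic constant 176: every row, every column, and both main diagonals of R sum to 176. -/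
def R : Fin 4 → Fin 4 → ℕ := fun i j => rev (M4 (3 - i) (3 - j))

structure IsMagicSquare_s9 {α : Type*} [AddCommMonoid α] {n : ℕ} (A : Fin n → Fin n → α) (s : α) :
    Prop where
  row_sum : ∀ i, ∑ j, A i j = s
  col_sum : ∀ j, ∑ i, A i j = s
  diag_sum : ∑ i, A i i = s
  antidiag_sum : ∑ i, A i i.rev = s

namespace IsMagicSquare_s9

variable {α : Type*} [AddCommMonoid α] {n : ℕ} {A B : Fin n → Fin n → α} {s t : α}

theorem add (hA : IsMagicSquare_s9 A s) (hB : IsMagicSquare_s9 B t) : IsMagicSquare_s9 (A + B) (s + t) where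
  row_sum i := by simp only [Pi.add_apply, Finset.sum_add_distrib, hA.row_sum, hB.row_sum]
  col_sum j := by simp only [Pi.add_apply, Finset.sum_add_distrib, hA.col_sum, hB.col_sum]
  diag_sum := by simp only [Pi.add_apply, Finset.sum_add_distrib, hA.diag_sum, hB.diag_sum]
  antidiag_sum := by
    simp only [Pi.add_apply, Finset.sum_add_distrib, hA.antidiag_sum, hB.antidiag_sum]

theorem smul {M : Type*} [Monoid M] [DistribMulAction M α] (c : M) (hA : IsMagicSquare_s9 A s) :
    IsMagicSquare_s9 (c • A) (c • s) where
  row_sum i := by simp only [Pi.smul_apply, ← Finset.smul_sum, hA.row_sum]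
  col_sum j := by simp only [Pi.smul_apply, ← Finset.smul_sum, hA.col_sum]
  diag_sum := by simp only [Pi.smul_apply, ← Finset.smul_sum, hA.diag_sum]
  antidiag_sum := by simp only [Pi.smul_apply, ← Finset.smul_sum, hA.antidiag_sum]

theorem rotate (hA : IsMagicSquare_s9 A s) : IsMagicSquare_s9 (fun i j => A i.rev j.rev) s where
  row_sum i := (Equiv.sum_comp Fin.revPerm (A i.rev)).trans (hA.row_sum _)
  col_sum j := (Equiv.sum_comp Fin.revPerm (A · j.rev)).trans (hA.col_sum _)
  diag_sum := (Equiv.sum_comp Fin.revPerm fun i => A i i).trans hA.diag_sum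
  antidiag_sum := by
    simpa only [Fin.revPerm_apply, Fin.rev_rev] using
      (Equiv.sum_comp Fin.revPerm fun i => A i i.rev).trans hA.antidiag_sum

end IsMagicSquare_s9

theorem IsMagicSquare_s9.rev {n : ℕ} {A : Fin n → Fin n → ℕ} {u t : ℕ}
    (hu : IsMagicSquare_s9 (fun i j => A i j % 10) u) (ht : IsMagicSquare_s9 (fun i j => A i j / 10) t) :
    IsMagicSquare_s9 (fun i j => rev (A i j)) (10 * u + t) :=
  (hu.smul 10).add ht

theorem isMagicSquare_M4_mod_ten : IsMagicSquare_s9 (fun i j => M4 i j % 10) 16 :=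
  ⟨by decide, by decide, by decide, by decide⟩

theorem isMagicSquare_M4_div_ten : IsMagicSquare_s9 (fun i j => M4 i j / 10) 16 :=
  ⟨by decide, by decide, by decide, by decide⟩

theorem Fin.three_sub_eq_rev (i : Fin 4) : 3 - i = i.rev :=
  Fin.last_sub i

theorem R_eq_rotate : R = fun i j => rev (M4 i.rev j.rev) := by
  funext i j
  simp only [R, Fin.three_sub_eq_rev]

theorem isMagicSquare_R : IsMagicSquare_s9 R 176 :=
  R_eq_rotate ▸ (isMagicSquare_M4_mod_ten.rev isMagicSquare_M4_div_ten).rotate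

theorem R_magic :
    (∀ i : Fin 4, ∑ j, R i j = 176) ∧
    (∀ j : Fin 4, ∑ i, R i j = 176) ∧
    (∑ i, R i i = 176) ∧
    (∑ i : Fin 4, R i (3 - i) = 176) := by
  obtain ⟨hrow, hcol, hdiag, hanti⟩ := isMagicSquare_R
  exact ⟨hrow, hcol, hdiag, by simpa only [Fin.three_sub_eq_rev] using hanti⟩
end
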